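/- Let X ∈ F not satisfy the first-order optimality condition (so that D(X) ≠ O and γ_max(X) > 0). Then for every α ∈ [0, ‖D(X)‖_F / γ_max(X)], the matrix X − α · D(X)/‖D(X)‖_F belongs to F, i.e. O ⪯ X − α D(X)/‖D(X)‖_F ⪯ I. -/

import Mathlib

set_option autoImplicit false

open Matrix Set Filter

attribute [local instance] Matrix.normedAddCommGroup Matrix.normedSpace

namespace BoxSDP

open scoped Classical

/-- Trace inner product `⟨A|B⟩ = Trace(Aᵀ B)`. -/
noncomputable def mip {m k : Type*} [Fintype m] [Fintype k]
    (A B : Matrix m k ℝ) : ℝ :=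
  (Aᵀ * B).trace

/-- Frobenius norm `‖A‖_F = √⟨A|A⟩`. -/
noncomputable def fnorm {m k : Type*} [Fintype m] [Fintype k]
    (A : Matrix m k ℝ) : ℝ :=
  Real.sqrt (mip A A)

/-- The feasible set `F = {X : O ⪯ X ⪯ I}` (membership forces symmetry). -/
def Feas (n : ℕ) : Set (Matrix (Fin n) (Fin n) ℝ) :=
  {X | X.PosSemidef ∧ (1 - X).PosSemidef}

/-- Square root of a positive semidefinite matrix (junk value `0` otherwise);
agrees with `A^{1/2} = Q K^{1/2} Qᵀ` on positive semidefinite matrices. -/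
noncomputable def psqrt {m : Type*} [Fintype m] [DecidableEq m]
    (A : Matrix m m ℝ) : Matrix m m ℝ :=
  if h : A.PosSemidef then
    h.1.eigenvectorUnitary.1 * Matrix.diagonal ((↑) ∘ Real.sqrt ∘ h.1.eigenvalues) *
      (star h.1.eigenvectorUnitary : Matrix m m ℝ) else 0

/-- Fourth root `A^{1/4}` of a positive semidefinite matrix. -/
noncomputable def proot4 {m : Type*} [Fintype m] [DecidableEq m]
    (A : Matrix m m ℝ) : Matrix m m ℝ :=
  psqrt (psqrt A)

/-- The 2-norm of a symmetric matrix: its largest absolute eigenvalue. -/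
noncomputable def norm2 {m : Type*} [Fintype m] [DecidableEq m]
    (A : Matrix m m ℝ) : ℝ :=
  if h : A.IsHermitian then sSup (Set.range fun i => |h.eigenvalues i|) else 0

/-- The linear functional `H ↦ ⟨G|H⟩`, as a continuous linear map; a function
`f` has gradient matrix `G` at `X` iff `HasFDerivAt f (gradCLM G) X`. -/
noncomputable def gradCLM {n : ℕ} (G : Matrix (Fin n) (Fin n) ℝ) :
    Matrix (Fin n) (Fin n) ℝ →L[ℝ] ℝ :=
  LinearMap.toContinuousLinearMap
    { toFun := fun H => mip G H
      map_add' := fun x y => by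
        simp [mip, Matrix.mul_add]
      map_smul' := fun c x => by
        simp [mip, Matrix.mul_smul] }

/-- The Hessian bilinear form `⟨A | ∇²f(X) | B⟩` induced by the derivative
`hessOp` of the gradient map. -/
noncomputable def hform {n : ℕ}
    (hessOp : Matrix (Fin n) (Fin n) ℝ →L[ℝ] Matrix (Fin n) (Fin n) ℝ)
    (A B : Matrix (Fin n) (Fin n) ℝ) : ℝ :=
  mip A (hessOp B)

/-- `underline-f`: the minimum of `⟨G | Y − X̂⟩` over `Y ∈ F`. -/
noncomputable def underf {n : ℕ} (G Xh : Matrix (Fin n) (Fin n) ℝ) : ℝ :=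
  sInf ((fun Y => mip G (Y - Xh)) '' Feas n)

/-- First-order optimality condition at `Xs` for gradient matrix `G`. -/
def FirstOrderOpt {n : ℕ} (G Xs : Matrix (Fin n) (Fin n) ℝ) : Prop :=
  ∀ X ∈ Feas n, 0 ≤ mip G (X - Xs)

/-- A fixed eigenvalue decomposition `G = P Γ Pᵀ` of a symmetric matrix `G`,
with eigenvalues in descending order, split into the block `Pp, gp` of
positive eigenvalues and the block `Pm, gm` of nonpositive eigenvalues. -/
structure SpecDecomp (n : ℕ) (G : Matrix (Fin n) (Fin n) ℝ) where
  np : ℕ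
  nm : ℕ
  hdim : np + nm = n
  Pp : Matrix (Fin n) (Fin np) ℝ
  Pm : Matrix (Fin n) (Fin nm) ℝ
  gp : Fin np → ℝ
  gm : Fin nm → ℝ
  hgp_pos : ∀ i, 0 < gp i
  hgm_nonpos : ∀ j, gm j ≤ 0
  hgp_anti : ∀ i j : Fin np, i ≤ j → gp j ≤ gp i
  hgm_anti : ∀ i j : Fin nm, i ≤ j → gm j ≤ gm i
  hPp_orth : Ppᵀ * Pp = 1
  hPm_orth : Pmᵀ * Pm = 1
  hPpPm : Ppᵀ * Pm = 0
  hPPT : Pp * Ppᵀ + Pm * Pmᵀ = 1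
  hG : G = Pp * Matrix.diagonal gp * Ppᵀ + Pm * Matrix.diagonal gm * Pmᵀ

namespace SpecDecomp

variable {n : ℕ} {G : Matrix (Fin n) (Fin n) ℝ}

/-- `V₊(X) = P₊ᵀ X P₊`. -/
def Vp (sd : SpecDecomp n G) (X : Matrix (Fin n) (Fin n) ℝ) :
    Matrix (Fin sd.np) (Fin sd.np) ℝ :=
  sd.Ppᵀ * X * sd.Pp

/-- `V₋(X) = P₋ᵀ (I − X) P₋`. -/
def Vm (sd : SpecDecomp n G) (X : Matrix (Fin n) (Fin n) ℝ) :
    Matrix (Fin sd.nm) (Fin sd.nm) ℝ :=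
  sd.Pmᵀ * (1 - X) * sd.Pm

/-- The search direction `D(X) = P M Pᵀ` with blocks
`M₁₁ = V₊^{1/2} Γ₊ V₊^{1/2}`, `M₁₂ = γ_max P₊ᵀ X P₋`,
`M₂₁ = γ_max P₋ᵀ X P₊`, `M₂₂ = V₋^{1/2} Γ₋ V₋^{1/2}`. -/
noncomputable def Dmat (sd : SpecDecomp n G) (X : Matrix (Fin n) (Fin n) ℝ) :
    Matrix (Fin n) (Fin n) ℝ :=
  sd.Pp * (psqrt (sd.Vp X) * Matrix.diagonal sd.gp * psqrt (sd.Vp X)) * sd.Ppᵀ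
    + norm2 G • (sd.Pp * (sd.Ppᵀ * X * sd.Pm) * sd.Pmᵀ)
    + norm2 G • (sd.Pm * (sd.Pmᵀ * X * sd.Pp) * sd.Ppᵀ)
    + sd.Pm * (psqrt (sd.Vm X) * Matrix.diagonal sd.gm * psqrt (sd.Vm X)) * sd.Pmᵀ

/-- `N(X) = ⟨G | D(X)⟩`. -/
noncomputable def Nval (sd : SpecDecomp n G) (X : Matrix (Fin n) (Fin n) ℝ) : ℝ :=
  mip G (sd.Dmat X)

end SpecDecomp

/-!
Conjugated by `P = [P₊ P₋]`, the off-diagonal blocks of `γ_max X` and of `D(X)` agree, so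
`γ_max X − D(X)` and `γ_max (I − X) + D(X)` are block diagonal, with blocks
`V₊^{1/2} (γ_max − Γ₊) V₊^{1/2}`, `γ_max P₋ᵀ X P₋ − V₋^{1/2} Γ₋ V₋^{1/2}`, respectively
`γ_max P₊ᵀ (I − X) P₊ + V₊^{1/2} Γ₊ V₊^{1/2}`, `V₋^{1/2} (γ_max + Γ₋) V₋^{1/2}`.
All four are positive semidefinite because the eigenvalues of `∇f(X)` lie in `[−γ_max, γ_max]`.
For `t = α / ‖D(X)‖_F` we have `t γ_max ≤ 1`, and both
`X − t D(X) = (1 − t γ_max) X + t (γ_max X − D(X))` and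
`I − X + t D(X) = (1 − t γ_max) (I − X) + t (γ_max (I − X) + D(X))`
are sums of positive semidefinite matrices.

On `F`, `⟨∇f(X) | Y⟩ = tr Γ₋ + tr (Γ₊ V₊(Y)) − tr (Γ₋ V₋(Y)) ≥ tr Γ₋`, and at `Y = X` the last two
traces are those of the diagonal blocks of `D(X)`; so `D(X) = O` would make `X` a minimiser.
-/

section General

variable {m k : Type*}

lemma posSemidef_sub_smul {A D : Matrix m m ℝ} {c t : ℝ} (hA : A.PosSemidef)
    (hD : (c • A - D).PosSemidef) (ht : 0 ≤ t) (htc : t * c ≤ 1) : (A - t • D).PosSemidef := by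
  have h : A - t • D = (1 - t * c) • A + t • (c • A - D) := by module
  rw [h]
  exact (hA.smul (sub_nonneg.mpr htc)).add (hD.smul ht)

variable [Fintype m] [Fintype k]

lemma posSemidef_transpose_mul_mul {A : Matrix m m ℝ} (hA : A.PosSemidef)
    (B : Matrix m k ℝ) : (Bᵀ * A * B).PosSemidef := by
  simpa using hA.conjTranspose_mul_mul_same B

lemma posSemidef_mul_mul_transpose {A : Matrix m m ℝ} (hA : A.PosSemidef)
    (B : Matrix k m ℝ) : (B * A * Bᵀ).PosSemidef := by
  simpa using hA.mul_mul_conjTranspose_same B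

lemma fnorm_pos {A : Matrix m k ℝ} (hA : A ≠ 0) : 0 < fnorm A := by
  have h := (posSemidef_conjTranspose_mul_self A).trace_nonneg
  have h' := trace_conjTranspose_mul_self_eq_zero_iff.not.mpr hA
  rw [conjTranspose_eq_transpose_of_trivial] at h h'
  exact Real.sqrt_pos.mpr (h.lt_of_ne' h')

variable [DecidableEq m]

lemma posSemidef_mul_diagonal_mul {S : Matrix m m ℝ} (hS : S.IsHermitian) {d : m → ℝ}
    (hd : 0 ≤ d) : (S * diagonal d * S).PosSemidef := by
  have h := (PosSemidef.diagonal hd).conjTranspose_mul_mul_same S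
  rwa [hS.eq] at h

lemma mul_diagonal_add_mul (S : Matrix m m ℝ) (c : ℝ) (d : m → ℝ) :
    S * diagonal (fun i => c + d i) * S = c • (S * S) + S * diagonal d * S := by
  rw [← diagonal_add (fun _ => c) d, ← smul_one_eq_diagonal, Matrix.mul_add, Matrix.add_mul,
    Matrix.mul_smul, Matrix.smul_mul, Matrix.mul_one]

lemma mul_diagonal_sub_mul (S : Matrix m m ℝ) (c : ℝ) (d : m → ℝ) :
    S * diagonal (fun i => c - d i) * S = c • (S * S) - S * diagonal d * S := by
  rw [← diagonal_sub (fun _ => c) d, ← smul_one_eq_diagonal, Matrix.mul_sub, Matrix.sub_mul,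
    Matrix.mul_smul, Matrix.smul_mul, Matrix.mul_one]

lemma trace_diagonal_mul_nonneg {d : m → ℝ} (hd : 0 ≤ d) {A : Matrix m m ℝ}
    (hA : A.PosSemidef) : 0 ≤ (diagonal d * A).trace := by
  simpa [trace, diagonal_mul] using
    Finset.sum_nonneg fun i _ => mul_nonneg (hd i) (hA.diag_nonneg (i := i))

lemma eq_eigenvectorUnitary_mul_diagonal {G : Matrix m m ℝ} (hG : G.IsHermitian) :
    G = (hG.eigenvectorUnitary : Matrix m m ℝ) * diagonal hG.eigenvalues
      * star (hG.eigenvectorUnitary : Matrix m m ℝ) := by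
  simpa [RCLike.ofReal_real_eq_id] using hG.spectral_theorem

lemma posSemidef_smul_one_add_smul {G : Matrix m m ℝ} (hG : G.IsHermitian)
    {a b : ℝ} (h : ∀ i, 0 ≤ a + b * hG.eigenvalues i) : (a • 1 + b • G).PosSemidef := by
  set U := (hG.eigenvectorUnitary : Matrix m m ℝ)
  have hU : U * star U = 1 := Matrix.mem_unitaryGroup_iff.mp hG.eigenvectorUnitary.2
  have hshift : a • 1 + b • G = U * diagonal (fun i => a + b * hG.eigenvalues i) * star U := by
    rw [← diagonal_add (fun _ => a), ← smul_one_eq_diagonal, show (fun i => b * hG.eigenvalues i)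
      = b • hG.eigenvalues from rfl, diagonal_smul, Matrix.mul_add, Matrix.add_mul,
      Matrix.mul_smul, Matrix.smul_mul, Matrix.mul_one, hU, Matrix.mul_smul, Matrix.smul_mul,
      ← eq_eigenvectorUnitary_mul_diagonal hG]
  rw [hshift, star_eq_conjTranspose]
  exact (PosSemidef.diagonal fun i => h i).mul_mul_conjTranspose_same U

lemma norm2_nonneg (G : Matrix m m ℝ) : 0 ≤ norm2 G := by
  rw [norm2]
  split_ifs
  · exact Real.sSup_nonneg (by rintro _ ⟨i, rfl⟩; exact abs_nonneg _)
  · exact le_rfl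

lemma abs_eigenvalues_le_norm2 {G : Matrix m m ℝ} (hG : G.IsHermitian) (i : m) :
    |hG.eigenvalues i| ≤ norm2 G := by
  rw [norm2, dif_pos hG]
  exact le_csSup (Set.finite_range _).bddAbove ⟨i, rfl⟩

lemma norm2_pos {G : Matrix m m ℝ} (hG : G.IsHermitian) (hG0 : G ≠ 0) : 0 < norm2 G := by
  obtain ⟨i, hi⟩ := Function.ne_iff.mp (hG.eigenvalues_eq_zero_iff.not.mpr hG0)
  exact (abs_pos.mpr hi).trans_le (abs_eigenvalues_le_norm2 hG i)

lemma posSemidef_norm2_smul_one_sub {G : Matrix m m ℝ} (hG : G.IsHermitian) :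
    (norm2 G • 1 - G).PosSemidef := by
  simpa [sub_eq_add_neg] using posSemidef_smul_one_add_smul hG (b := -1) fun i => by
    linarith [(abs_le.mp (abs_eigenvalues_le_norm2 hG i)).2]

lemma posSemidef_norm2_smul_one_add {G : Matrix m m ℝ} (hG : G.IsHermitian) :
    (norm2 G • 1 + G).PosSemidef := by
  simpa using posSemidef_smul_one_add_smul hG (b := 1) fun i => by
    linarith [(abs_le.mp (abs_eigenvalues_le_norm2 hG i)).1]

lemma psqrt_posSemidef {A : Matrix m m ℝ} (hA : A.PosSemidef) : (psqrt A).PosSemidef := by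
  rw [psqrt, dif_pos hA, star_eq_conjTranspose]
  exact (PosSemidef.diagonal fun i => by simp [Real.sqrt_nonneg]).mul_mul_conjTranspose_same _

lemma psqrt_mul_self {A : Matrix m m ℝ} (hA : A.PosSemidef) : psqrt A * psqrt A = A := by
  rw [psqrt, dif_pos hA]
  set U := (hA.1.eigenvectorUnitary : Matrix m m ℝ)
  have hU : star U * U = 1 := Matrix.mem_unitaryGroup_iff'.mp hA.1.eigenvectorUnitary.2
  have hsq : diagonal ((↑) ∘ Real.sqrt ∘ hA.1.eigenvalues : m → ℝ)
      * diagonal ((↑) ∘ Real.sqrt ∘ hA.1.eigenvalues : m → ℝ) = diagonal hA.1.eigenvalues := by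
    rw [diagonal_mul_diagonal]
    congr 1
    funext i
    simp [Real.mul_self_sqrt (hA.eigenvalues_nonneg i)]
  conv_rhs => rw [eq_eigenvectorUnitary_mul_diagonal hA.1, ← hsq]
  simp only [Matrix.mul_assoc]
  rw [← Matrix.mul_assoc (star U) U, hU, Matrix.one_mul]

lemma trace_psqrt_mul_diagonal_mul_psqrt {A : Matrix m m ℝ} (hA : A.PosSemidef) (d : m → ℝ) :
    (psqrt A * diagonal d * psqrt A).trace = (diagonal d * A).trace := by
  rw [trace_mul_cycle, psqrt_mul_self hA, trace_mul_comm]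

end General

namespace SpecDecomp

variable {n : ℕ} {G : Matrix (Fin n) (Fin n) ℝ} (sd : SpecDecomp n G)

lemma transpose_Pm_mul_Pp : sd.Pmᵀ * sd.Pp = 0 := by
  simpa using congrArg transpose sd.hPpPm

section Cancel

variable {k : Type*}

@[simp] lemma transpose_Pp_mul_Pp_mul (Z : Matrix (Fin sd.np) k ℝ) : sd.Ppᵀ * (sd.Pp * Z) = Z := by
  rw [← Matrix.mul_assoc, sd.hPp_orth, Matrix.one_mul]

@[simp] lemma transpose_Pp_mul_Pm_mul (Z : Matrix (Fin sd.nm) k ℝ) : sd.Ppᵀ * (sd.Pm * Z) = 0 := by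
  rw [← Matrix.mul_assoc, sd.hPpPm, Matrix.zero_mul]

@[simp] lemma transpose_Pm_mul_Pp_mul (Z : Matrix (Fin sd.np) k ℝ) : sd.Pmᵀ * (sd.Pp * Z) = 0 := by
  rw [← Matrix.mul_assoc, sd.transpose_Pm_mul_Pp, Matrix.zero_mul]

@[simp] lemma transpose_Pm_mul_Pm_mul (Z : Matrix (Fin sd.nm) k ℝ) : sd.Pmᵀ * (sd.Pm * Z) = Z := by
  rw [← Matrix.mul_assoc, sd.hPm_orth, Matrix.one_mul]

end Cancel

lemma isSymm (sd : SpecDecomp n G) : G.IsSymm := by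
  rw [IsSymm, sd.hG]
  simp [Matrix.transpose_mul, Matrix.mul_assoc]

lemma isHermitian (sd : SpecDecomp n G) : G.IsHermitian := by
  rw [IsHermitian, conjTranspose_eq_transpose_of_trivial, sd.isSymm.eq]

lemma transpose_Pp_mul_mul_Pp : sd.Ppᵀ * G * sd.Pp = diagonal sd.gp := by
  simp [sd.hG, Matrix.mul_add, Matrix.mul_assoc, sd.hPp_orth]

lemma transpose_Pm_mul_mul_Pm : sd.Pmᵀ * G * sd.Pm = diagonal sd.gm := by
  simp [sd.hG, Matrix.mul_add, Matrix.mul_assoc, sd.hPm_orth]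

lemma one_sub_Vp (X : Matrix (Fin n) (Fin n) ℝ) : 1 - sd.Vp X = sd.Ppᵀ * (1 - X) * sd.Pp := by
  rw [Vp, Matrix.mul_sub, Matrix.sub_mul, Matrix.mul_one, sd.hPp_orth]

lemma one_sub_Vm (X : Matrix (Fin n) (Fin n) ℝ) : 1 - sd.Vm X = sd.Pmᵀ * X * sd.Pm := by
  rw [Vm, Matrix.mul_sub, Matrix.sub_mul, Matrix.mul_one, sd.hPm_orth, sub_sub_cancel]

variable {X : Matrix (Fin n) (Fin n) ℝ}

lemma posSemidef_Vp (hX : X ∈ Feas n) : (sd.Vp X).PosSemidef :=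
  posSemidef_transpose_mul_mul hX.1 sd.Pp

lemma posSemidef_Vm (hX : X ∈ Feas n) : (sd.Vm X).PosSemidef :=
  posSemidef_transpose_mul_mul hX.2 sd.Pm

lemma gp_le_norm2 (i : Fin sd.np) : sd.gp i ≤ norm2 G := by
  have h := posSemidef_transpose_mul_mul (posSemidef_norm2_smul_one_sub sd.isHermitian) sd.Pp
  rw [Matrix.mul_sub, Matrix.sub_mul, Matrix.mul_smul, Matrix.smul_mul, Matrix.mul_one,
    sd.hPp_orth, transpose_Pp_mul_mul_Pp, smul_one_eq_diagonal, diagonal_sub,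
    posSemidef_diagonal_iff] at h
  exact sub_nonneg.mp (h i)

lemma neg_norm2_le_gm (j : Fin sd.nm) : -norm2 G ≤ sd.gm j := by
  have h := posSemidef_transpose_mul_mul (posSemidef_norm2_smul_one_add sd.isHermitian) sd.Pm
  rw [Matrix.mul_add, Matrix.add_mul, Matrix.mul_smul, Matrix.smul_mul, Matrix.mul_one,
    sd.hPm_orth, transpose_Pm_mul_mul_Pm, smul_one_eq_diagonal, diagonal_add,
    posSemidef_diagonal_iff] at h
  linarith [h j]

lemma eq_block_sum (Z : Matrix (Fin n) (Fin n) ℝ) :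
    Z = sd.Pp * (sd.Ppᵀ * Z * sd.Pp) * sd.Ppᵀ + sd.Pp * (sd.Ppᵀ * Z * sd.Pm) * sd.Pmᵀ
      + sd.Pm * (sd.Pmᵀ * Z * sd.Pp) * sd.Ppᵀ + sd.Pm * (sd.Pmᵀ * Z * sd.Pm) * sd.Pmᵀ := by
  conv_lhs => rw [← Matrix.one_mul Z, ← Matrix.mul_one (1 * Z), ← sd.hPPT]
  simp only [Matrix.mul_add, Matrix.add_mul, Matrix.mul_assoc]
  abel

variable (X)

lemma norm2_smul_sub_Dmat :
    norm2 G • X - sd.Dmat X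
      = sd.Pp * (norm2 G • sd.Vp X - psqrt (sd.Vp X) * diagonal sd.gp * psqrt (sd.Vp X)) * sd.Ppᵀ
        + sd.Pm * (norm2 G • (1 - sd.Vm X) - psqrt (sd.Vm X) * diagonal sd.gm * psqrt (sd.Vm X))
          * sd.Pmᵀ := by
  rw [one_sub_Vm, Dmat]
  nth_rewrite 1 [sd.eq_block_sum X]
  simp only [Vp, Matrix.mul_sub, Matrix.sub_mul, smul_add, Matrix.mul_smul, Matrix.smul_mul]
  abel

lemma norm2_smul_one_sub_add_Dmat :
    norm2 G • (1 - X) + sd.Dmat X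
      = sd.Pp * (norm2 G • (1 - sd.Vp X) + psqrt (sd.Vp X) * diagonal sd.gp * psqrt (sd.Vp X))
          * sd.Ppᵀ
        + sd.Pm * (norm2 G • sd.Vm X + psqrt (sd.Vm X) * diagonal sd.gm * psqrt (sd.Vm X))
          * sd.Pmᵀ := by
  calc norm2 G • (1 - X) + sd.Dmat X
      = norm2 G • (sd.Pp * sd.Ppᵀ + sd.Pm * sd.Pmᵀ) - (norm2 G • X - sd.Dmat X) := by
        rw [sd.hPPT]; module
    _ = _ := by
        rw [norm2_smul_sub_Dmat]
        simp only [Matrix.mul_add, Matrix.add_mul, Matrix.mul_sub, Matrix.sub_mul, smul_sub,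
          smul_add, Matrix.mul_smul, Matrix.smul_mul, Matrix.mul_one]
        abel

variable {X}

lemma posSemidef_norm2_smul_sub_Dmat (hX : X ∈ Feas n) :
    (norm2 G • X - sd.Dmat X).PosSemidef := by
  have hVp := sd.posSemidef_Vp hX
  have hVm := sd.posSemidef_Vm hX
  have hSp := (psqrt_posSemidef hVp).1
  have hSm := (psqrt_posSemidef hVm).1
  rw [norm2_smul_sub_Dmat]
  refine (posSemidef_mul_mul_transpose ?_ _).add (posSemidef_mul_mul_transpose ?_ _)
  · have h : norm2 G • sd.Vp X - psqrt (sd.Vp X) * diagonal sd.gp * psqrt (sd.Vp X)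
        = psqrt (sd.Vp X) * diagonal (fun i => norm2 G - sd.gp i) * psqrt (sd.Vp X) := by
      rw [mul_diagonal_sub_mul, psqrt_mul_self hVp]
    rw [h]
    exact posSemidef_mul_diagonal_mul hSp fun i => sub_nonneg.mpr (sd.gp_le_norm2 i)
  · have h : -(psqrt (sd.Vm X) * diagonal sd.gm * psqrt (sd.Vm X))
        = psqrt (sd.Vm X) * diagonal (fun j => -sd.gm j) * psqrt (sd.Vm X) := by
      rw [← diagonal_neg, mul_neg, neg_mul]
    rw [sub_eq_add_neg, h, one_sub_Vm]
    exact ((posSemidef_transpose_mul_mul hX.1 sd.Pm).smul (norm2_nonneg G)).add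
      (posSemidef_mul_diagonal_mul hSm fun j => neg_nonneg.mpr (sd.hgm_nonpos j))

lemma posSemidef_norm2_smul_one_sub_add_Dmat (hX : X ∈ Feas n) :
    (norm2 G • (1 - X) + sd.Dmat X).PosSemidef := by
  have hVp := sd.posSemidef_Vp hX
  have hVm := sd.posSemidef_Vm hX
  rw [norm2_smul_one_sub_add_Dmat]
  refine (posSemidef_mul_mul_transpose ?_ _).add (posSemidef_mul_mul_transpose ?_ _)
  · rw [one_sub_Vp]
    exact ((posSemidef_transpose_mul_mul hX.2 sd.Pp).smul (norm2_nonneg G)).add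
      (posSemidef_mul_diagonal_mul (psqrt_posSemidef hVp).1 fun i => (sd.hgp_pos i).le)
  · have h := mul_diagonal_add_mul (psqrt (sd.Vm X)) (norm2 G) sd.gm
    rw [psqrt_mul_self hVm] at h
    rw [← h]
    exact posSemidef_mul_diagonal_mul (psqrt_posSemidef hVm).1 fun j =>
      neg_le_iff_add_nonneg'.mp (sd.neg_norm2_le_gm j)

lemma sub_smul_Dmat_mem_Feas (hX : X ∈ Feas n) {t : ℝ} (ht : 0 ≤ t) (htγ : t * norm2 G ≤ 1) :
    X - t • sd.Dmat X ∈ Feas n := by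
  refine ⟨posSemidef_sub_smul hX.1 (sd.posSemidef_norm2_smul_sub_Dmat hX) ht htγ, ?_⟩
  rw [show 1 - (X - t • sd.Dmat X) = (1 - X) - t • -sd.Dmat X by module]
  exact posSemidef_sub_smul hX.2 (by simpa using sd.posSemidef_norm2_smul_one_sub_add_Dmat hX)
    ht htγ

variable (X)

lemma trace_mul_eq_trace_diagonal_gm_add :
    (G * X).trace = (diagonal sd.gm).trace + (diagonal sd.gp * sd.Vp X).trace
      - (diagonal sd.gm * sd.Vm X).trace := by
  have hcyc : ∀ {k : Type} [Fintype k] (P : Matrix (Fin n) k ℝ) (Γ : Matrix k k ℝ),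
      (P * Γ * Pᵀ * X).trace = (Γ * (Pᵀ * X * P)).trace := fun P Γ => by
    rw [Matrix.mul_assoc (P * Γ), trace_mul_comm, ← Matrix.mul_assoc, trace_mul_comm]
  conv_lhs => rw [sd.hG]
  rw [Matrix.add_mul, trace_add, hcyc, hcyc, ← one_sub_Vm, Matrix.mul_sub, Matrix.mul_one,
    trace_sub, Vp]
  ring

variable {X}

lemma trace_diagonal_gm_le_trace_mul (hX : X ∈ Feas n) :
    (diagonal sd.gm).trace ≤ (G * X).trace := by
  have hp := trace_diagonal_mul_nonneg (fun i => (sd.hgp_pos i).le) (sd.posSemidef_Vp hX)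
  have hm := trace_diagonal_mul_nonneg (d := fun j => -sd.gm j)
    (fun j => neg_nonneg.mpr (sd.hgm_nonpos j)) (sd.posSemidef_Vm hX)
  rw [← diagonal_neg, Matrix.neg_mul, trace_neg] at hm
  rw [trace_mul_eq_trace_diagonal_gm_add]
  linarith

lemma transpose_Pp_mul_Dmat_mul_Pp :
    sd.Ppᵀ * sd.Dmat X * sd.Pp = psqrt (sd.Vp X) * diagonal sd.gp * psqrt (sd.Vp X) := by
  simp [Dmat, Matrix.mul_add, Matrix.add_mul, Matrix.mul_assoc, sd.hPp_orth, sd.transpose_Pm_mul_Pp]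

lemma transpose_Pm_mul_Dmat_mul_Pm :
    sd.Pmᵀ * sd.Dmat X * sd.Pm = psqrt (sd.Vm X) * diagonal sd.gm * psqrt (sd.Vm X) := by
  simp [Dmat, Matrix.mul_add, Matrix.add_mul, Matrix.mul_assoc, sd.hPm_orth, sd.hPpPm]

lemma firstOrderOpt_of_Dmat_eq_zero (hX : X ∈ Feas n) (hD : sd.Dmat X = 0) :
    FirstOrderOpt G X := by
  have hp : (diagonal sd.gp * sd.Vp X).trace = 0 := by
    rw [← trace_psqrt_mul_diagonal_mul_psqrt (sd.posSemidef_Vp hX),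
      ← transpose_Pp_mul_Dmat_mul_Pp, hD]
    simp
  have hm : (diagonal sd.gm * sd.Vm X).trace = 0 := by
    rw [← trace_psqrt_mul_diagonal_mul_psqrt (sd.posSemidef_Vm hX),
      ← transpose_Pm_mul_Dmat_mul_Pm, hD]
    simp
  intro Y hY
  have hY' := sd.trace_diagonal_gm_le_trace_mul hY
  rw [mip, sd.isSymm.eq, Matrix.mul_sub, trace_sub, sd.trace_mul_eq_trace_diagonal_gm_add X, hp, hm]
  linarith

end SpecDecomp

theorem step_along_direction_mem_Feas_general {n : ℕ}
    (grad : Matrix (Fin n) (Fin n) ℝ → Matrix (Fin n) (Fin n) ℝ)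
    (X : Matrix (Fin n) (Fin n) ℝ) (hX : X ∈ Feas n)
    (sd : SpecDecomp n (grad X))
    (hnopt : ¬ FirstOrderOpt (grad X) X) :
    sd.Dmat X ≠ 0 ∧ 0 < norm2 (grad X) ∧
      ∀ α : ℝ, 0 ≤ α → α ≤ fnorm (sd.Dmat X) / norm2 (grad X) →
        X - (α / fnorm (sd.Dmat X)) • sd.Dmat X ∈ Feas n := by
  have hD : sd.Dmat X ≠ 0 := fun hD => hnopt (sd.firstOrderOpt_of_Dmat_eq_zero hX hD)
  have hγ : 0 < norm2 (grad X) :=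
    norm2_pos sd.isHermitian fun hG => hnopt fun Y _ => by simp [mip, hG]
  have hDF := fnorm_pos hD
  refine ⟨hD, hγ, fun α hα0 hα1 => sd.sub_smul_Dmat_mem_Feas hX (div_nonneg hα0 hDF.le) ?_⟩
  rw [div_mul_eq_mul_div, div_le_one hDF]
  exact (le_div_iff₀ hγ).mp hα1

theorem step_along_direction_mem_Feas {n : ℕ}
    (f : Matrix (Fin n) (Fin n) ℝ → ℝ)
    (grad : Matrix (Fin n) (Fin n) ℝ → Matrix (Fin n) (Fin n) ℝ)
    (hgradsym : ∀ X ∈ Feas n, (grad X).IsSymm)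
    (hgrad : ∀ X ∈ Feas n, HasFDerivAt f (gradCLM (grad X)) X)
    (X : Matrix (Fin n) (Fin n) ℝ) (hX : X ∈ Feas n)
    (sd : SpecDecomp n (grad X))
    (hnopt : ¬ FirstOrderOpt (grad X) X) :
    sd.Dmat X ≠ 0 ∧ 0 < norm2 (grad X) ∧
      ∀ α : ℝ, 0 ≤ α → α ≤ fnorm (sd.Dmat X) / norm2 (grad X) →
        X - (α / fnorm (sd.Dmat X)) • sd.Dmat X ∈ Feas n :=
  step_along_direction_mem_Feas_general grad X hX sd hnopt

end BoxSDP
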